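/- arXiv:1507.08486 — 3 statements merged into one kernel-verified Lean document; each statement's English description precedes it below -/
import Mathlib

section
/- Let k be a field of characteristic ≠ 2, V = k^n, R a k-algebra, and T = (t_{ij}) a matrix over R. If the element T¹³ T²³ ∈ End(V ⊗ V) ⊗ R commutes with τ ⊗ 1 (where τ is the flip of the two copies of V), then all the entries t_{ij} of T commute with one another. -/
/-- Let `char k ≠ 2`, `V = k^n`, `R` a `k`-algebra, `T = (t i j)` a matrix over `R`.
If `T¹³ T²³ ∈ End(V ⊗ V) ⊗ R` (a matrix indexed by `Fin n × Fin n`) commutes with the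
flip `τ ⊗ 1`, then the entries of `T` pairwise commute. -/
theorem stmt_3 (k : Type*) [Field k] (h2 : (2 : k) ≠ 0) (n : ℕ)
    (R : Type*) [Ring R] [Algebra k R] (t : Fin n → Fin n → R)
    (T13 T23 σ : Matrix (Fin n × Fin n) (Fin n × Fin n) R)
    (hT13 : T13 = fun pq ij => if pq.2 = ij.2 then t pq.1 ij.1 else 0)
    (hT23 : T23 = fun pq ij => if pq.1 = ij.1 then t pq.2 ij.2 else 0)
    (hσ : σ = fun pq ij => if pq.1 = ij.2 ∧ pq.2 = ij.1 then 1 else 0)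
    (hcomm : σ * (T13 * T23) = (T13 * T23) * σ) :
    ∀ i j p q, t i j * t p q = t p q * t i j := by
  have hX : ∀ a b : Fin n × Fin n, (T13 * T23) a b = t a.1 b.1 * t a.2 b.2 := by
    intro a b
    rw [Matrix.mul_apply]
    simp [Matrix.mul_apply, hT13, hT23, Fintype.sum_prod_type, ite_and,
      Finset.sum_ite_eq, Finset.sum_ite_eq']
  intro i j p q
  have h := congrFun (congrFun hcomm (p, i)) (j, q)
  rw [Matrix.mul_apply, Matrix.mul_apply] at h
  simp only [hσ, hX] at h
  simpa [Fintype.sum_prod_type, ite_and, Finset.sum_ite_eq, Finset.sum_ite_eq',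
    mul_ite, ite_mul, mul_zero, zero_mul, mul_one, one_mul] using h
end

section
/- Let k have characteristic ≠ 2, let A be a commutative unital k-algebra generated by a finite-dimensional quadratically independent subspace V, let C be a coalgebra (or Hopf algebra) coacting on A such that the coaction α satisfies α(V) ⊆ V ⊗ C and α is an algebra map into A ⊗ C. Then the induced coaction of C on V ⊗ V (via α on each factor) maps the subspace of antisymmetric tensors ∧²V into ∧²V ⊗ C, i.e., ∧²V is a subcomodule of V ⊗ V. -/
open TensorProduct

set_option maxHeartbeats 2000000 in
set_option synthInstance.maxHeartbeats 400000 in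
/-- Let `char k ≠ 2`, `A` a commutative unital `k`-algebra generated by a finite-dimensional
quadratically independent subspace `V`, and `C` a bialgebra coacting on `A` by an algebra
map `α : A → A ⊗ C` with `α(V) ⊆ V ⊗ C` (witnessed by `β : V → V ⊗ C`). Then the induced
coaction `γ` on `V ⊗ V` maps the antisymmetric tensors `∧²V` into `∧²V ⊗ C`. -/
theorem stmt_9 (k : Type*) [Field k] (h2 : (2 : k) ≠ 0)
    (A : Type*) [CommRing A] [Algebra k A]
    (V : Submodule k A) [FiniteDimensional k V]
    (hgen : Algebra.adjoin k (V : Set A) = ⊤)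
    -- quadratic independence: the map S²V = (V⊗V)/Λ' → A induced by multiplication is injective
    (μ : V ⊗[k] V →ₗ[k] A)
    (hμ : ∀ v w : V, μ (v ⊗ₜ[k] w) = (v : A) * (w : A))
    (Λ : Submodule k (V ⊗[k] V))
    (hΛ : Λ = Submodule.span k {x | ∃ v w : V, x = v ⊗ₜ[k] w - w ⊗ₜ[k] v})
    (hΛker : Λ ≤ LinearMap.ker μ)
    (hqi : Function.Injective (Λ.liftQ (M := V ⊗[k] V) μ hΛker))
    (C : Type*) [Ring C] [Bialgebra k C]
    (α : A →ₐ[k] A ⊗[k] C)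
    -- coaction axioms
    (hcoassoc : ∀ a, (TensorProduct.assoc k A C C)
        ((TensorProduct.map α.toLinearMap LinearMap.id) (α a))
      = (TensorProduct.map LinearMap.id Coalgebra.comul) (α a))
    (hcounit : ∀ a, (TensorProduct.rid k A)
        ((TensorProduct.map LinearMap.id Coalgebra.counit) (α a)) = a)
    -- α(V) ⊆ V ⊗ C, witnessed by β
    (β : V →ₗ[k] V ⊗[k] C)
    (hβ : ∀ v : V, α (v : A) = (TensorProduct.map V.subtype LinearMap.id) (β v)) :
    -- the induced coaction on V ⊗ V
    letI γ : V ⊗[k] V →ₗ[k] (V ⊗[k] V) ⊗[k] C :=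
      (TensorProduct.map LinearMap.id (LinearMap.mul' k C)) ∘ₗ
        (TensorProduct.tensorTensorTensorComm k V C V C).toLinearMap ∘ₗ
          TensorProduct.map β β
    ∀ x ∈ Λ, γ x ∈ LinearMap.range
      (TensorProduct.map Λ.subtype (LinearMap.id : C →ₗ[k] C)) := by
  intro x hx
  set γ : V ⊗[k] V →ₗ[k] (V ⊗[k] V) ⊗[k] C :=
    (TensorProduct.map LinearMap.id (LinearMap.mul' k C)) ∘ₗ
      (TensorProduct.tensorTensorTensorComm k V C V C).toLinearMap ∘ₗ
        TensorProduct.map β β with hγ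
  -- key compatibility: (μ ⊗ id) ∘ γ = α ∘ μ
  have key : (TensorProduct.map μ (LinearMap.id : C →ₗ[k] C)) ∘ₗ γ
      = α.toLinearMap ∘ₗ μ := by
    apply TensorProduct.ext'
    intro v w
    have h1 : γ (v ⊗ₜ[k] w) =
        (TensorProduct.map LinearMap.id (LinearMap.mul' k C))
          ((TensorProduct.tensorTensorTensorComm k V C V C) (β v ⊗ₜ[k] β w)) := rfl
    have h2 : ∀ (x : V ⊗[k] C) (y : V ⊗[k] C),
        (TensorProduct.map μ (LinearMap.id : C →ₗ[k] C))
          ((TensorProduct.map LinearMap.id (LinearMap.mul' k C))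
            ((TensorProduct.tensorTensorTensorComm k V C V C) (x ⊗ₜ[k] y)))
        = (TensorProduct.map V.subtype (LinearMap.id : C →ₗ[k] C)) x *
          (TensorProduct.map V.subtype (LinearMap.id : C →ₗ[k] C)) y := by
      intro x y
      induction x with
      | zero => simp
      | add a b ha hb => simp [add_tmul, ha, hb, add_mul]
      | tmul a c =>
        induction y with
        | zero => simp
        | add a' b' ha hb => simp [tmul_add, ha, hb, mul_add]
        | tmul b d =>
          simp [tensorTensorTensorComm_tmul, hμ, Algebra.TensorProduct.tmul_mul_tmul]
    simp only [LinearMap.comp_apply, h1, h2 (β v) (β w), ← hβ, AlgHom.toLinearMap_apply,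
      hμ, map_mul]
  -- hence γ x lies in the kernel of μ ⊗ id
  have hker : (TensorProduct.map μ (LinearMap.id : C →ₗ[k] C)) (γ x) = 0 := by
    have := congrArg (fun f => f x) key
    simp only [LinearMap.comp_apply] at this
    rw [this, LinearMap.mem_ker.mp (hΛker hx), map_zero]
  -- ker μ = Λ
  have hkerμ : LinearMap.ker μ = Λ := by
    refine le_antisymm ?_ hΛker
    intro y hy
    have := @hqi (Submodule.Quotient.mk y) 0 (by
      rw [map_zero, Submodule.liftQ_apply]
      exact LinearMap.mem_ker.mp hy)
    simpa [Submodule.Quotient.mk_eq_zero] using this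
  -- μ ⊗ id = (liftQ ⊗ id) ∘ (mkQ ⊗ id), with liftQ ⊗ id injective
  set q := Λ.mkQ (M := V ⊗[k] V) with hq
  have hμfact : (LinearMap.rTensor C μ)
      = (LinearMap.rTensor C (Λ.liftQ (M := V ⊗[k] V) μ hΛker)) ∘ₗ (LinearMap.rTensor C q) := by
    rw [← LinearMap.rTensor_comp, hq]
    exact congrArg (LinearMap.rTensor C) (Submodule.liftQ_mkQ (M := V ⊗[k] V) Λ μ hΛker).symm
  have hinj : Function.Injective (LinearMap.rTensor C (Λ.liftQ (M := V ⊗[k] V) μ hΛker)) :=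
    Module.Flat.rTensor_preserves_injective_linearMap _ hqi
  have hmkQ : (LinearMap.rTensor C q) (γ x) = 0 := by
    apply hinj
    have : (LinearMap.rTensor C μ) (γ x) = 0 := hker
    rw [hμfact] at this
    simpa using this
  have : γ x ∈ LinearMap.ker (LinearMap.rTensor C q) := hmkQ
  rw [hq] at this
  exact (SetLike.ext_iff.mp (rTensor_mkQ (M := V ⊗[k] V) C Λ) (γ x)).mp this
end

section
/- Let k be a field of characteristic ≠ 2 and H a bialgebra over k coacting on a finite-dimensional vector space V = k^n with coaction matrix T = (t_{ij}), i.e., α(e_j) = Σ_i e_i ⊗ t_{ij}. Suppose the induced coaction on V ⊗ V preserves both S²V (symmetric tensors) and ∧²V (antisymmetric tensors). Then the matrix entries t_{ij} pairwise commute; in particular, the subalgebra of H generated by the t_{ij} is commutative. -/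
open TensorProduct

private lemma extract_coeff {k : Type*} [Field k] {M H : Type*} [AddCommGroup M] [Module k M]
    [AddCommGroup H] [Module k H] {ι : Type*} [Fintype ι] [DecidableEq ι]
    (b : Module.Basis ι k M) (f g : ι → H)
    (heq : ∑ i : ι, b i ⊗ₜ[k] f i = ∑ i : ι, b i ⊗ₜ[k] g i) : ∀ i, f i = g i := by
  intro i
  have := congrArg ((TensorProduct.lid k H).toLinearMap ∘ₗ LinearMap.rTensor H (b.coord i)) heq
  simpa [map_sum, LinearMap.rTensor_tmul, Module.Basis.coord_apply, Module.Basis.repr_self,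
    Finsupp.single_apply, ite_smul, Finset.sum_ite_eq'] using this

private lemma eig_fix {k M H : Type*} [Field k] [AddCommGroup M] [Module k M]
    [AddCommGroup H] [Module k H] (τ : Module.End k M) (μ : k) (y : M ⊗[k] H)
    (hy : y ∈ LinearMap.range (TensorProduct.map (Module.End.eigenspace τ μ).subtype
      (LinearMap.id : H →ₗ[k] H))) :
    LinearMap.rTensor H (τ : M →ₗ[k] M) y = μ • y := by
  obtain ⟨z, rfl⟩ := hy
  induction z using TensorProduct.induction_on with
  | zero => simp
  | tmul v h =>
    have hv : τ v.1 = μ • v.1 := Module.End.mem_eigenspace_iff.mp v.2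
    simp only [TensorProduct.map_tmul, LinearMap.rTensor_tmul, Submodule.coe_subtype,
      LinearMap.id_coe, id_eq, hv, TensorProduct.smul_tmul']
  | add x y hx hy => simp only [map_add, hx, hy, smul_add]

private lemma key_aux {k M H : Type*} [Field k] [AddCommGroup M] [Module k M]
    [AddCommGroup H] [Module k H] (h2 : (2 : k) ≠ 0)
    (τ : Module.End k M) (α2 : M →ₗ[k] M ⊗[k] H)
    (hS : ∀ x ∈ Module.End.eigenspace τ 1, α2 x ∈ LinearMap.range
      (TensorProduct.map (Module.End.eigenspace τ 1).subtype (LinearMap.id : H →ₗ[k] H)))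
    (hA : ∀ x ∈ Module.End.eigenspace τ (-1), α2 x ∈ LinearMap.range
      (TensorProduct.map (Module.End.eigenspace τ (-1)).subtype (LinearMap.id : H →ₗ[k] H)))
    (u v : M) (huv : τ u = v) (hvu : τ v = u) :
    LinearMap.rTensor H (τ : M →ₗ[k] M) (α2 u) = α2 v := by
  have hmemS : u + v ∈ Module.End.eigenspace τ 1 := by
    rw [Module.End.mem_eigenspace_iff, map_add, huv, hvu, one_smul, add_comm]
  have hmemA : u - v ∈ Module.End.eigenspace τ (-1) := by
    rw [Module.End.mem_eigenspace_iff, map_sub, huv, hvu, neg_smul, one_smul, neg_sub]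
  have h1 := eig_fix τ 1 _ (hS _ hmemS)
  have h2' := eig_fix τ (-1) _ (hA _ hmemA)
  rw [one_smul] at h1
  rw [neg_smul, one_smul] at h2'
  have e1 : (2 : k) • u = (u + v) + (u - v) := by rw [two_smul]; abel
  have e2 : (2 : k) • v = (u + v) - (u - v) := by rw [two_smul]; abel
  apply smul_right_injective (M ⊗[k] H) h2
  show (2 : k) • LinearMap.rTensor H (τ : M →ₗ[k] M) (α2 u) = (2 : k) • α2 v
  calc (2 : k) • LinearMap.rTensor H (τ : M →ₗ[k] M) (α2 u)
      = LinearMap.rTensor H (τ : M →ₗ[k] M) (α2 ((u + v) + (u - v))) := by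
        rw [← e1, map_smul, map_smul]
    _ = α2 (u + v) - α2 (u - v) := by rw [map_add, map_add, h1, h2']; abel
    _ = (2 : k) • α2 v := by rw [← map_smul, e2, map_sub α2 (u + v) (u - v)]

/-- Let `char k ≠ 2` and `H` a bialgebra coacting on `V = k^n` with coaction matrix
`T = (t i j)`, i.e. `α(e j) = Σ i, e i ⊗ t i j`, satisfying the comodule axioms. If the
induced coaction on `V ⊗ V` (with matrix `T¹³T²³`) preserves both the symmetric tensors
`S²V` and the antisymmetric tensors `∧²V`, then the entries `t i j` pairwise commute;
in particular the subalgebra of `H` they generate is commutative. -/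
theorem stmt_10 (k : Type*) [Field k] (h2 : (2 : k) ≠ 0) (n : ℕ)
    (H : Type*) [Ring H] [Bialgebra k H] (t : Fin n → Fin n → H)
    -- comodule axioms for the matrix t
    (hΔ : ∀ i j, Coalgebra.comul (R := k) (t i j) = ∑ l : Fin n, t i l ⊗ₜ[k] t l j)
    (hε : ∀ i j, Coalgebra.counit (R := k) (t i j) = if i = j then (1 : k) else 0) :
    letI V := Fin n → k
    letI e : Module.Basis (Fin n) k V := Pi.basisFun k (Fin n)
    letI b : Module.Basis (Fin n × Fin n) k (V ⊗[k] V) := e.tensorProduct e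
    -- induced coaction on V ⊗ V, with matrix T¹³T²³
    letI α2 : V ⊗[k] V →ₗ[k] (V ⊗[k] V) ⊗[k] H :=
      b.constr k fun ij => ∑ p : Fin n, ∑ q : Fin n,
        (e p ⊗ₜ[k] e q) ⊗ₜ[k] (t p ij.1 * t q ij.2)
    letI τ : Module.End k (V ⊗[k] V) := (TensorProduct.comm k V V).toLinearMap
    letI Sym := Module.End.eigenspace τ 1
    letI Alt := Module.End.eigenspace τ (-1)
    (∀ x ∈ Sym, α2 x ∈ LinearMap.range
        (TensorProduct.map Sym.subtype (LinearMap.id : H →ₗ[k] H))) →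
    (∀ x ∈ Alt, α2 x ∈ LinearMap.range
        (TensorProduct.map Alt.subtype (LinearMap.id : H →ₗ[k] H))) →
    ((∀ i j p q, Commute (t i j) (t p q)) ∧
      ∀ x ∈ Algebra.adjoin k {h : H | ∃ i j, h = t i j},
        ∀ y ∈ Algebra.adjoin k {h : H | ∃ i j, h = t i j}, x * y = y * x) := by
  intro hS hA
  let V := Fin n → k
  let e : Module.Basis (Fin n) k V := Pi.basisFun k (Fin n)
  let b : Module.Basis (Fin n × Fin n) k (V ⊗[k] V) := e.tensorProduct e
  let α2 : V ⊗[k] V →ₗ[k] (V ⊗[k] V) ⊗[k] H :=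
      b.constr k fun ij => ∑ p : Fin n, ∑ q : Fin n,
        (e p ⊗ₜ[k] e q) ⊗ₜ[k] (t p ij.1 * t q ij.2)
  let τ : Module.End k (V ⊗[k] V) := (TensorProduct.comm k V V).toLinearMap
  have hτb : ∀ i j : Fin n, τ (b (i, j)) = b (j, i) := by
    intro i j
    show τ (b (i, j)) = b (j, i)
    rw [Module.Basis.tensorProduct_apply, Module.Basis.tensorProduct_apply]
    exact TensorProduct.comm_tmul k V V (e i) (e j)
  have key : ∀ i j : Fin n,
      LinearMap.rTensor H (τ : (V ⊗[k] V) →ₗ[k] V ⊗[k] V) (α2 (b (i, j))) = α2 (b (j, i)) :=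
    fun i j => key_aux h2 τ α2 hS hA (b (i, j)) (b (j, i)) (hτb i j) (hτb j i)
  have hα2b : ∀ i j : Fin n,
      α2 (b (i, j)) = ∑ pq : Fin n × Fin n, b pq ⊗ₜ[k] (t pq.1 i * t pq.2 j) := by
    intro i j
    show (b.constr k fun ij => ∑ p : Fin n, ∑ q : Fin n,
        (e p ⊗ₜ[k] e q) ⊗ₜ[k] (t p ij.1 * t q ij.2)) (b (i, j))
      = ∑ pq : Fin n × Fin n, b pq ⊗ₜ[k] (t pq.1 i * t pq.2 j)
    rw [Module.Basis.constr_basis, Fintype.sum_prod_type]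
    exact Finset.sum_congr rfl fun p _ => Finset.sum_congr rfl fun q _ => by
      rw [Module.Basis.tensorProduct_apply]
  have hcomm0 : ∀ i j p q : Fin n, t q i * t p j = t p j * t q i := by
    intro i j p q
    have hk := key i j
    rw [hα2b i j, hα2b j i, map_sum] at hk
    have hL : ∀ pq : Fin n × Fin n,
        LinearMap.rTensor H (τ : (V ⊗[k] V) →ₗ[k] V ⊗[k] V)
          (b pq ⊗ₜ[k] (t pq.1 i * t pq.2 j))
        = b (pq.2, pq.1) ⊗ₜ[k] (t pq.1 i * t pq.2 j) := by
      intro pq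
      rw [LinearMap.rTensor_tmul]
      congr 1
      exact hτb pq.1 pq.2
    simp only [hL] at hk
    rw [← Equiv.sum_comp (Equiv.prodComm (Fin n) (Fin n))
      (fun pq : Fin n × Fin n => b (pq.2, pq.1) ⊗ₜ[k] (t pq.1 i * t pq.2 j))] at hk
    simp only [Equiv.prodComm_apply, Prod.swap] at hk
    have := extract_coeff b (fun pq => t pq.2 i * t pq.1 j) (fun pq => t pq.1 j * t pq.2 i)
      hk (p, q)
    simpa using this
  refine ⟨fun i j p q => hcomm0 j q p i, ?_⟩
  intro x hx y hy
  have h1 : ∀ a, (∃ i j, a = t i j) → ∀ y' ∈ Algebra.adjoin k {h : H | ∃ i j, h = t i j},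
      Commute a y' := by
    intro a ha y' hy'
    induction hy' using Algebra.adjoin_induction with
    | mem z hz =>
      obtain ⟨i, j, rfl⟩ := ha
      obtain ⟨p, q, rfl⟩ := hz
      exact hcomm0 j q p i
    | algebraMap r => exact (Algebra.commutes r a).symm
    | add u v hu hv ihu ihv => exact ihu.add_right ihv
    | mul u v hu hv ihu ihv => exact ihu.mul_right ihv
  have h2' : Commute x y := by
    induction hx using Algebra.adjoin_induction with
    | mem z hz => exact h1 z hz y hy
    | algebraMap r => exact Algebra.commutes r y
    | add u v hu hv ihu ihv => exact ihu.add_left ihv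
    | mul u v hu hv ihu ihv => exact ihu.mul_left ihv
  exact h2'
end
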